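/- arXiv:math/0610677 — 2 statements merged into one kernel-verified Lean document; each statement's English description precedes it below -/
import Mathlib

section
/- On the unit sphere S²ⁿ⁻¹ ⊂ ℂⁿ with Hopf projection π : S²ⁿ⁻¹ → ℂPⁿ⁻¹, suppose θ : ℂPⁿ⁻¹ → ℝ is a smooth nonnegative function vanishing to order two on a closed set C̄ = π(𝒞) (i.e. θ = 0 and dθ = 0 on π(𝒞)), and h_α : π⁻¹(U_α) → ℝ are smooth functions subordinate to a partition of unity {Φ_α} with each i·N-derivative of h_α strictly negative on (K∖𝒞) ∩ π⁻¹(U_α). Then the function H = (θ∘π)·Σ_α (Φ_α∘π)·h_α satisfies: (1) the derivative of H in the direction i·N(x) is strictly negative at every point of K∖𝒞, and (2) dH vanishes identically on 𝒞. -/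
open scoped BigOperators

/-- Sullivan-type gluing (partition of unity step on the Hopf fibration).
Functions of the form `f ∘ π` (here `tp` = `θ∘π` and `Phi i` = `Φ_α∘π`) have
vanishing derivative along the characteristic field `x ↦ I•x`.  If `tp ≥ 0`
vanishes to order two on `C`, is positive on `K∖C`, the `Phi i` form a partition
of unity on the sphere subordinate to `U i`, and each `h i` has strictly negative
`I•N`-derivative on `(K∖C) ∩ U i`, then `H = tp · Σ (Phi i)·(h i)` has strictly
negative derivative along `I•x` at every point of `K∖C`, and `dH = 0` on `C`. -/
theorem stmt2 (n : ℕ) (ι : Type*) [Fintype ι]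
    (K C : Set (EuclideanSpace ℂ (Fin n)))
    (hKs : K ⊆ Metric.sphere 0 1) (hCK : C ⊆ K)
    (tp : EuclideanSpace ℂ (Fin n) → ℝ)
    (Phi h : ι → EuclideanSpace ℂ (Fin n) → ℝ)
    (U : ι → Set (EuclideanSpace ℂ (Fin n)))
    (htp : ContDiff ℝ (⊤ : ℕ∞) tp) (hPhi : ∀ i, ContDiff ℝ (⊤ : ℕ∞) (Phi i))
    (hh : ∀ i, ContDiff ℝ (⊤ : ℕ∞) (h i))
    (htp0 : ∀ x, 0 ≤ tp x)
    (htpC : ∀ x ∈ C, tp x = 0 ∧ fderiv ℝ tp x = 0)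
    (htppos : ∀ x ∈ K \ C, 0 < tp x)
    (htpfib : ∀ x, fderiv ℝ tp x (Complex.I • x) = 0)
    (hPhifib : ∀ i x, fderiv ℝ (Phi i) x (Complex.I • x) = 0)
    (hPhi0 : ∀ i x, 0 ≤ Phi i x)
    (hPhisum : ∀ x ∈ Metric.sphere (0 : EuclideanSpace ℂ (Fin n)) 1,
      ∑ i, Phi i x = 1)
    (hsupp : ∀ i, Function.support (Phi i) ⊆ U i)
    (hhdec : ∀ i, ∀ x ∈ (K \ C) ∩ U i, fderiv ℝ (h i) x (Complex.I • x) < 0) :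
    (∀ x ∈ K \ C,
        fderiv ℝ (fun y => tp y * ∑ i, Phi i y * h i y) x (Complex.I • x) < 0) ∧
    (∀ x ∈ C, fderiv ℝ (fun y => tp y * ∑ i, Phi i y * h i y) x = 0) := by
  have htpd : Differentiable ℝ tp := htp.differentiable (by simp)
  have hPhid : ∀ i, Differentiable ℝ (Phi i) := fun i => (hPhi i).differentiable (by simp)
  have hhd : ∀ i, Differentiable ℝ (h i) := fun i => (hh i).differentiable (by simp)
  have hgd : ∀ x, DifferentiableAt ℝ (fun y => ∑ i, Phi i y * h i y) x := by
    intro x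
    exact DifferentiableAt.fun_sum fun i _ => ((hPhid i) x).mul ((hhd i) x)
  have hmul : ∀ x, fderiv ℝ (fun y => tp y * ∑ i, Phi i y * h i y) x
      = tp x • fderiv ℝ (fun y => ∑ i, Phi i y * h i y) x
        + (∑ i, Phi i x * h i x) • fderiv ℝ tp x := by
    intro x
    exact fderiv_mul (htpd x) (hgd x)
  have hsumd : ∀ x, fderiv ℝ (fun y => ∑ i, Phi i y * h i y) x
      = ∑ i, fderiv ℝ (fun y => Phi i y * h i y) x := by
    intro x
    exact fderiv_fun_sum fun i _ => ((hPhid i) x).mul ((hhd i) x)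
  have hterm : ∀ i x, fderiv ℝ (fun y => Phi i y * h i y) x (Complex.I • x)
      = Phi i x * fderiv ℝ (h i) x (Complex.I • x) := by
    intro i x
    rw [fderiv_fun_mul ((hPhid i) x) ((hhd i) x)]
    simp [hPhifib i x]
  constructor
  · intro x hx
    rw [hmul x]
    simp only [ContinuousLinearMap.add_apply, ContinuousLinearMap.smul_apply,
      htpfib x, smul_eq_mul, mul_zero, add_zero]
    have hgval : fderiv ℝ (fun y => ∑ i, Phi i y * h i y) x (Complex.I • x)
        = ∑ i, Phi i x * fderiv ℝ (h i) x (Complex.I • x) := by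
      rw [hsumd x, ContinuousLinearMap.sum_apply]
      exact Finset.sum_congr rfl fun i _ => hterm i x
    rw [hgval]
    have hxK : x ∈ Metric.sphere (0 : EuclideanSpace ℂ (Fin n)) 1 := hKs hx.1
    have hex : ∃ j, 0 < Phi j x := by
      by_contra hcon
      push_neg at hcon
      have : ∀ i, Phi i x = 0 := fun i => le_antisymm (hcon i) (hPhi0 i x)
      have hs := hPhisum x hxK
      rw [Finset.sum_congr rfl fun i _ => this i] at hs
      simp at hs
    obtain ⟨j, hj⟩ := hex
    have hsneg : (∑ i, Phi i x * fderiv ℝ (h i) x (Complex.I • x)) < 0 := by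
      have : (∑ i, Phi i x * fderiv ℝ (h i) x (Complex.I • x)) < ∑ _i : ι, (0 : ℝ) := by
        apply Finset.sum_lt_sum
        · intro i _
          rcases eq_or_lt_of_le (hPhi0 i x) with h0 | hpos
          · simp [← h0]
          · have hxU : x ∈ U i := hsupp i (by simpa [Function.mem_support] using hpos.ne')
            exact le_of_lt (mul_neg_of_pos_of_neg hpos (hhdec i x ⟨hx, hxU⟩))
        · refine ⟨j, Finset.mem_univ j, ?_⟩
          have hxU : x ∈ U j := hsupp j (by simpa [Function.mem_support] using hj.ne')
          exact mul_neg_of_pos_of_neg hj (hhdec j x ⟨hx, hxU⟩)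
      simpa using this
    exact mul_neg_of_pos_of_neg (htppos x hx) hsneg
  · intro x hx
    rw [hmul x, (htpC x hx).1, (htpC x hx).2]
    simp
end

section
/- Let K be a compact subset of the unit sphere S²ⁿ⁻¹ ⊂ ℂⁿ containing no complete Hopf circle. Then every point x with π(x) ∈ π(K) admits a neighborhood B of π(x) in ℂPⁿ⁻¹, a continuous local section s : B → S²ⁿ⁻¹ of the Hopf projection π, and ε > 0 such that for all x̃ ∈ B the open Hopf-flow arc {e^{it}·s(x̃) : t ∈ (−ε, ε)} is disjoint from K. -/
/-!
Since `K` contains no full Hopf circle, some point `z` of the circle over `π(x)` lies outside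
`K`. The unit representative on which `⟪z, ·⟫` is positive is a continuous section of `π` over
the chart `⟪z, ·⟫ ≠ 0`, and it passes through `z`. As `K` is closed, continuity of
`(p, t) ↦ e^{it} s(p)` at `(π(x), 0)` yields a product neighbourhood `B × (-ε, ε)` mapped into
the complement of `K`.
-/

noncomputable instance (n : ℕ) : TopologicalSpace (Projectivization ℂ (EuclideanSpace ℂ (Fin n))) :=
  inferInstanceAs (TopologicalSpace (Quotient _))

open scoped LinearAlgebra.Projectivization

namespace Projectivization

section NormalizedRep

variable {𝕜 E : Type*} [RCLike 𝕜] [NormedAddCommGroup E] [NormedSpace 𝕜 E]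

/-- The unit representative of `p` on which `f` is real and positive; it is `0` when `f`
vanishes on `p`. -/
noncomputable def normalizedRep (f : E →L[𝕜] 𝕜) : ℙ 𝕜 E → E :=
  Projectivization.lift (fun v => ((‖f v‖ : 𝕜) / (f v * ‖(v : E)‖)) • (v : E)) <| by
    rintro ⟨-, ha⟩ ⟨b, hb⟩ t rfl
    have ht : t ≠ 0 := by rintro rfl; simp at ha
    have ht' : (‖t‖ : 𝕜) ≠ 0 := by simpa using ht
    simp only [map_smul, smul_eq_mul, norm_smul, norm_mul, RCLike.ofReal_mul, smul_smul]
    congr 1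
    simp only [div_eq_mul_inv, mul_inv]
    field_simp

theorem normalizedRep_mk (f : E →L[𝕜] 𝕜) (v : E) (hv : v ≠ 0) :
    normalizedRep f (mk 𝕜 v hv) = ((‖f v‖ : 𝕜) / (f v * ‖v‖)) • v :=
  rfl

theorem map_mk_rep_ne_zero_iff (f : E →L[𝕜] 𝕜) (v : E) (hv : v ≠ 0) :
    f (mk 𝕜 v hv).rep ≠ 0 ↔ f v ≠ 0 := by
  obtain ⟨a, ha⟩ := exists_smul_eq_mk_rep 𝕜 v hv
  simp [← ha, Units.smul_def]

theorem norm_normalizedRep (f : E →L[𝕜] 𝕜) {p : ℙ 𝕜 E} (hp : f p.rep ≠ 0) :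
    ‖normalizedRep f p‖ = 1 := by
  induction p using ind with
  | h v hv =>
    rw [map_mk_rep_ne_zero_iff] at hp
    have hv' : ‖v‖ ≠ 0 := norm_ne_zero_iff.2 hv
    rw [normalizedRep_mk, norm_smul]
    simp only [norm_div, norm_algebraMap', norm_norm, norm_mul]
    field_simp

theorem mk_normalizedRep (f : E →L[𝕜] 𝕜) {p : ℙ 𝕜 E} (hp : normalizedRep f p ≠ 0) :
    mk 𝕜 (normalizedRep f p) hp = p := by
  induction p using ind with
  | h v hv =>
    simp_rw [normalizedRep_mk] at hp ⊢
    exact (mk_eq_mk_iff' 𝕜 _ _ _ hv).2 ⟨_, rfl⟩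

theorem normalizedRep_mk_of_norm_eq_one (f : E →L[𝕜] 𝕜) {v : E} (hv0 : v ≠ 0) (hv : ‖v‖ = 1)
    {r : ℝ} (hr : 0 < r) (hfv : f v = r) : normalizedRep f (mk 𝕜 v hv0) = v := by
  rw [normalizedRep_mk, hfv, hv]
  simp [abs_of_pos hr, hr.ne']

end NormalizedRep

section Topology

variable {m : ℕ}

theorem isQuotientMap_mk' :
    Topology.IsQuotientMap (mk' ℂ : {v : EuclideanSpace ℂ (Fin m) // v ≠ 0} → _) :=
  isQuotientMap_quotient_mk'

theorem isOpen_setOf_map_rep_ne_zero (f : EuclideanSpace ℂ (Fin m) →L[ℂ] ℂ) :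
    IsOpen {p : ℙ ℂ (EuclideanSpace ℂ (Fin m)) | f p.rep ≠ 0} := by
  rw [← isQuotientMap_mk'.isOpen_preimage]
  have : mk' ℂ ⁻¹' {p | f p.rep ≠ 0} = {v : {v : EuclideanSpace ℂ (Fin m) // v ≠ 0} | f v ≠ 0} := by
    ext ⟨v, hv⟩
    exact map_mk_rep_ne_zero_iff f v hv
  rw [this]
  exact isOpen_ne_fun (by fun_prop) continuous_const

theorem continuousOn_normalizedRep (f : EuclideanSpace ℂ (Fin m) →L[ℂ] ℂ) :
    ContinuousOn (normalizedRep f) {p | f p.rep ≠ 0} := by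
  rw [isQuotientMap_mk'.continuousOn_isOpen_iff (isOpen_setOf_map_rep_ne_zero f)]
  rintro ⟨v, hv⟩ hfv
  have hfv : f v ≠ 0 := (map_mk_rep_ne_zero_iff f v hv).1 hfv
  have hv' : (‖v‖ : ℂ) ≠ 0 := by simpa using hv
  refine ContinuousAt.continuousWithinAt ?_
  change ContinuousAt (fun w : {v : EuclideanSpace ℂ (Fin m) // v ≠ 0} =>
    ((‖f w‖ : ℂ) / (f w * ‖(w : EuclideanSpace ℂ (Fin m))‖)) • (w : EuclideanSpace ℂ (Fin m))) _
  fun_prop (disch := simp [hfv, hv'])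

end Topology

end Projectivization

open Projectivization Topology

section HopfArcs

variable {E : Type*} [NormedAddCommGroup E] [NormedSpace ℂ E]

theorem exists_exp_smul_notMem {K : Set E}
    (hK : ∀ y ∈ K, ∃ t : ℝ, Complex.exp (t * Complex.I) • y ∉ K) (v : E) :
    ∃ t : ℝ, Complex.exp (t * Complex.I) • v ∉ K := by
  by_cases hv : v ∈ K
  · exact hK v hv
  · exact ⟨0, by simpa using hv⟩

theorem ContinuousAt.exists_isOpen_exp_smul_notMem {X : Type*} [TopologicalSpace X] {K : Set E}
    (hK : IsClosed K) {s : X → E} {p₀ : X} (hs : ContinuousAt s p₀) (hp₀ : s p₀ ∉ K) :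
    ∃ U : Set X, IsOpen U ∧ p₀ ∈ U ∧ ∃ ε > 0, ∀ p ∈ U, ∀ t : ℝ, |t| < ε →
      Complex.exp (t * Complex.I) • s p ∉ K := by
  have hflow : ContinuousAt (fun q : X × ℝ => Complex.exp (q.2 * Complex.I) • s q.1) (p₀, 0) := by
    fun_prop
  have hgood : {q : X × ℝ | Complex.exp (q.2 * Complex.I) • s q.1 ∉ K} ∈ 𝓝 (p₀, 0) :=
    hflow.preimage_mem_nhds (hK.isOpen_compl.mem_nhds (by simpa using hp₀))
  obtain ⟨U, T, hU, hp₀U, hT, h0T, hUT⟩ := mem_nhds_prod_iff'.1 hgood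
  obtain ⟨ε, hε, hball⟩ := Metric.isOpen_iff.1 hT 0 h0T
  refine ⟨U, hU, hp₀U, ε, hε, fun p hp t ht => @hUT (p, t) ⟨hp, hball ?_⟩⟩
  simpa [Real.dist_eq] using ht

end HopfArcs

theorem stmt3_general (n : ℕ) (K : Set (EuclideanSpace ℂ (Fin (n + 1))))
    (hK : IsCompact K)
    (hnoc : ∀ y ∈ K, ∃ t : ℝ, Complex.exp (t * Complex.I) • y ∉ K)
    (x : EuclideanSpace ℂ (Fin (n + 1))) (hx0 : x ≠ 0) :
    ∃ (B : Set (Projectivization ℂ (EuclideanSpace ℂ (Fin (n + 1)))))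
      (s : Projectivization ℂ (EuclideanSpace ℂ (Fin (n + 1))) →
        EuclideanSpace ℂ (Fin (n + 1))) (ε : ℝ),
      0 < ε ∧ IsOpen B ∧ Projectivization.mk ℂ x hx0 ∈ B ∧ ContinuousOn s B ∧
      (∀ p ∈ B, ∃ hp : s p ≠ 0, ‖s p‖ = 1 ∧ Projectivization.mk ℂ (s p) hp = p) ∧
      ∀ p ∈ B, ∀ t : ℝ, |t| < ε → Complex.exp (t * Complex.I) • s p ∉ K := by
  obtain ⟨t₀, hzK⟩ := exists_exp_smul_notMem hnoc (((‖x‖⁻¹ : ℝ) : ℂ) • x)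
  rw [smul_smul] at hzK
  set z := (Complex.exp (t₀ * Complex.I) * ((‖x‖⁻¹ : ℝ) : ℂ)) • x
  have hz : ‖z‖ = 1 := by
    simp [z, norm_smul, hx0]
  have hz0 : z ≠ 0 := norm_ne_zero_iff.1 (by simp [hz])
  have hxz : mk ℂ x hx0 = mk ℂ z hz0 := ((mk_eq_mk_iff' ℂ z x hz0 hx0).2 ⟨_, rfl⟩).symm
  set f := innerSL ℂ z
  have hfz : f z = (1 : ℝ) := by simp [f, hz]
  have hsx : normalizedRep f (mk ℂ x hx0) = z := by
    rw [hxz]; exact normalizedRep_mk_of_norm_eq_one f hz0 hz one_pos hfz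
  have hxB : mk ℂ x hx0 ∈ {p | f p.rep ≠ 0} := by
    simp [hxz, map_mk_rep_ne_zero_iff, hfz]
  obtain ⟨U, hU, hxU, ε, hε, harc⟩ := ((continuousOn_normalizedRep f).continuousAt
    ((isOpen_setOf_map_rep_ne_zero f).mem_nhds hxB)).exists_isOpen_exp_smul_notMem hK.isClosed
    (hsx ▸ hzK)
  refine ⟨{p | f p.rep ≠ 0} ∩ U, normalizedRep f, ε, hε, (isOpen_setOf_map_rep_ne_zero f).inter hU,
    ⟨hxB, hxU⟩, (continuousOn_normalizedRep f).mono Set.inter_subset_left, fun p hp => ?_,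
    fun p hp => harc p hp.2⟩
  have hnorm := norm_normalizedRep f hp.1
  have hp0 : normalizedRep f p ≠ 0 := norm_ne_zero_iff.1 (by simp [hnorm])
  exact ⟨hp0, hnorm, mk_normalizedRep f hp0⟩

/-- Local sections with a uniform Hopf-flow gap.  If `K` is a compact subset of the
unit sphere `S^{2n+1} ⊂ ℂ^{n+1}` containing no complete Hopf circle, then every
point `x` of the sphere whose Hopf class lies in `π(K)` admits an open
neighbourhood `B` of `π(x)` in `ℂPⁿ`, a continuous local section `s` of the Hopf
projection over `B`, and `ε > 0` such that for all `p ∈ B` the open arc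
`{e^{it}·s(p) : |t| < ε}` is disjoint from `K`. -/
theorem stmt3 (n : ℕ) (K : Set (EuclideanSpace ℂ (Fin (n + 1))))
    (hK : IsCompact K) (hKs : K ⊆ Metric.sphere 0 1)
    (hnoc : ∀ y ∈ K, ∃ t : ℝ, Complex.exp (t * Complex.I) • y ∉ K)
    (x : EuclideanSpace ℂ (Fin (n + 1))) (hx : ‖x‖ = 1) (hx0 : x ≠ 0)
    (hxK : ∃ y ∈ K, ∃ c : ℂ, ‖c‖ = 1 ∧ y = c • x) :
    ∃ (B : Set (Projectivization ℂ (EuclideanSpace ℂ (Fin (n + 1)))))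
      (s : Projectivization ℂ (EuclideanSpace ℂ (Fin (n + 1))) →
        EuclideanSpace ℂ (Fin (n + 1))) (ε : ℝ),
      0 < ε ∧ IsOpen B ∧ Projectivization.mk ℂ x hx0 ∈ B ∧ ContinuousOn s B ∧
      (∀ p ∈ B, ∃ hp : s p ≠ 0, ‖s p‖ = 1 ∧ Projectivization.mk ℂ (s p) hp = p) ∧
      ∀ p ∈ B, ∀ t : ℝ, |t| < ε → Complex.exp (t * Complex.I) • s p ∉ K :=
  stmt3_general n K hK hnoc x hx0
end
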